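/- For every α, β ∈ ℝ and every z ∈ ℂ with z ≠ 1, setting X = −(1/2)·!![exp(i(β+α)), exp(−i(β+α)); exp(−i(β−α)), exp(i(β−α))], M₀ = !![1, −1; −1, 1], and V = !![exp(−iα), 0; 0, exp(iα)] (2×2 complex matrices, I the 2×2 identity), one has I − z·I − Xᴴ·(I − z·I)⁻¹·X = (cos 2β/(2(1−z)))·V·M₀·Vᴴ − ((−2z² + 4z − 1 + cos 2β)/(2(1−z)))·I; note V·M₀·Vᴴ = !![1, −exp(−2iα); −exp(2iα), 1]. -/

import Mathlib

/-!
Writing `a = exp (iβ)` and `u = exp (iα)`, the hopping matrix factors as `X = X₀ Vᴴ`,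
where `X₀ = -(1/2) [[a, ā], [ā, a]]` is the hopping matrix of the symmetric gauge and
`V = diag (ū, u)` is unitary. Hence `Xᴴ X = V (X₀ᴴ X₀) Vᴴ`, and
`X₀ᴴ X₀ = ((1 + cos 2β)/2) I - (cos 2β / 2) M₀` because `a² + ā² = 2 cos 2β`. Since `I - z I` is scalar, the Schur complement is a linear
combination of `I` and `V M₀ Vᴴ`.
-/

open Complex Matrix ComplexConjugate

lemma conj_exp_I_mul (θ : ℝ) : conj (exp (I * θ)) = exp (-(I * θ)) := by
  rw [← exp_conj]
  simp

lemma conj_exp_I_mul_self (θ : ℝ) : conj (exp (I * θ)) * exp (I * θ) = 1 := by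
  rw [conj_exp_I_mul, ← exp_add, neg_add_cancel, exp_zero]

lemma ofReal_cos_two_mul_eq (θ : ℝ) :
    (Real.cos (2 * θ) : ℂ) = (exp (I * θ) ^ 2 + conj (exp (I * θ)) ^ 2) / 2 := by
  rw [conj_exp_I_mul, ← exp_nat_mul, ← exp_nat_mul, ofReal_cos, cos]
  push_cast
  ring_nf

lemma mul_smul_one_inv_mul {n K : Type*} [Fintype n] [DecidableEq n] [Field K]
    (Y X : Matrix n n K) {c : K} (hc : c ≠ 0) : Y * (c • 1)⁻¹ * X = c⁻¹ • (Y * X) := by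
  have hinv : (c • (1 : Matrix n n K))⁻¹ = c⁻¹ • 1 :=
    inv_eq_left_inv (by rw [smul_mul_smul_comm, inv_mul_cancel₀ hc, one_mul, one_smul])
  rw [hinv, Matrix.mul_smul, mul_one, Matrix.smul_mul]

def gaugeMatrix (u : ℂ) : Matrix (Fin 2) (Fin 2) ℂ := !![conj u, 0; 0, u]

noncomputable def symmetricHopping (a : ℂ) : Matrix (Fin 2) (Fin 2) ℂ :=
  -(1 / 2 : ℂ) • !![a, conj a; conj a, a]

section UnitModulus

variable {u : ℂ} (hu : conj u * u = 1)
include hu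

lemma gaugeMatrix_mul_conjTranspose : gaugeMatrix u * (gaugeMatrix u)ᴴ = 1 := by
  ext i j
  fin_cases i <;> fin_cases j <;>
    simp [gaugeMatrix, Matrix.mul_apply, Fin.sum_univ_two, mul_comm u, hu]

lemma gaugeMatrix_mul_mul_conjTranspose :
    gaugeMatrix u * !![1, -1; -1, 1] * (gaugeMatrix u)ᴴ = !![1, -conj u ^ 2; -u ^ 2, 1] := by
  ext i j
  fin_cases i <;> fin_cases j <;>
    simp [gaugeMatrix, Matrix.mul_apply, Fin.sum_univ_two, mul_comm u, hu, sq]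

end UnitModulus

lemma symmetricHopping_conjTranspose_mul_self {a : ℂ} (ha : conj a * a = 1) :
    (symmetricHopping a)ᴴ * symmetricHopping a =
      ((1 + (a ^ 2 + conj a ^ 2) / 2) / 2) • 1 -
        ((a ^ 2 + conj a ^ 2) / 2 / 2) • !![1, -1; -1, 1] := by
  ext i j
  fin_cases i <;> fin_cases j <;>
    simp [symmetricHopping, Matrix.mul_apply, Fin.sum_univ_two, map_ofNat]
  all_goals first | ring1 | linear_combination ha / 2

lemma symmetricHopping_mul_gaugeMatrix_conjTranspose (a u : ℂ) :
    symmetricHopping a * (gaugeMatrix u)ᴴ =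
      -(1 / 2 : ℂ) • !![a * u, conj a * conj u; conj a * u, a * conj u] := by
  ext i j
  fin_cases i <;> fin_cases j <;>
    simp [symmetricHopping, gaugeMatrix, Matrix.mul_apply, Fin.sum_univ_two, mul_assoc]

theorem stmt1 (α β : ℝ) (z : ℂ) (hz : z ≠ 1)
    (X : Matrix (Fin 2) (Fin 2) ℂ)
    (hX : X = -((1 / 2 : ℂ)) •
      !![Complex.exp (Complex.I * (β + α)), Complex.exp (-(Complex.I * (β + α)));
         Complex.exp (-(Complex.I * (β - α))), Complex.exp (Complex.I * (β - α))])
    (M₀ : Matrix (Fin 2) (Fin 2) ℂ) (hM₀ : M₀ = !![1, -1; -1, 1])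
    (V : Matrix (Fin 2) (Fin 2) ℂ)
    (hV : V = !![Complex.exp (-(Complex.I * α)), 0; 0, Complex.exp (Complex.I * α)]) :
    (1 : Matrix (Fin 2) (Fin 2) ℂ) - z • (1 : Matrix (Fin 2) (Fin 2) ℂ) -
        Xᴴ * ((1 : Matrix (Fin 2) (Fin 2) ℂ) - z • (1 : Matrix (Fin 2) (Fin 2) ℂ))⁻¹ * X =
      (((Real.cos (2 * β) : ℝ) : ℂ) / (2 * (1 - z))) • (V * M₀ * Vᴴ) -
        ((-2 * z ^ 2 + 4 * z - 1 + ((Real.cos (2 * β) : ℝ) : ℂ)) / (2 * (1 - z))) •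
          (1 : Matrix (Fin 2) (Fin 2) ℂ) ∧
    V * M₀ * Vᴴ =
      !![1, -Complex.exp (-(2 * Complex.I * α)); -Complex.exp (2 * Complex.I * α), 1] := by
  have hu := conj_exp_I_mul_self α
  have hV' : V = gaugeMatrix (exp (I * α)) := by rw [hV, gaugeMatrix, conj_exp_I_mul]
  have hX' : X = symmetricHopping (exp (I * β)) * Vᴴ := by
    rw [hX, hV', symmetricHopping_mul_gaugeMatrix_conjTranspose]
    simp only [conj_exp_I_mul, ← exp_add]
    ring_nf
  have hXX : Xᴴ * X = ((1 + Real.cos (2 * β)) / 2 : ℂ) • 1 -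
      (Real.cos (2 * β) / 2 : ℂ) • (V * M₀ * Vᴴ) := by
    have hVV : V * Vᴴ = 1 := hV' ▸ gaugeMatrix_mul_conjTranspose hu
    rw [hX', conjTranspose_mul, conjTranspose_conjTranspose, Matrix.mul_assoc,
      ← Matrix.mul_assoc _ _ Vᴴ,
      symmetricHopping_conjTranspose_mul_self (conj_exp_I_mul_self β), ← ofReal_cos_two_mul_eq,
      ← hM₀]
    simp only [Matrix.mul_sub, Matrix.sub_mul, Matrix.mul_smul, Matrix.smul_mul, Matrix.one_mul,
      Matrix.mul_assoc, hVV]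
  constructor
  · have h1z : (1 : Matrix (Fin 2) (Fin 2) ℂ) - z • 1 = (1 - z) • 1 := by
      rw [sub_smul, one_smul]
    rw [h1z, mul_smul_one_inv_mul _ _ (sub_ne_zero.mpr hz.symm), hXX]
    match_scalars <;> field_simp
    ring
  · rw [hV', hM₀, gaugeMatrix_mul_mul_conjTranspose hu, conj_exp_I_mul, ← exp_nat_mul,
      ← exp_nat_mul]
    ring_nf
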